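/- Fix an even integer k ≥ 4, a nonnegative integer j, and a real A ≥ 1. The function W is smooth on (0,∞), and there exists a constant C = C(k, j, A) such that for every y > 0 one has |y^j W^{(j)}(y)| ≤ C · (1 + y)^{−A}. -/

import Mathlib

/-- `γ(s) = (2π)^{−s} Γ(s + (k−1)/2)`. -/
noncomputable def gammaW (k : ℕ) (s : ℂ) : ℂ :=
  (2 * Real.pi : ℂ) ^ (-s) * Complex.Gamma (s + ((k : ℂ) - 1) / 2)

/-- `W(y)`, the contour integral over `Re(s) = 2` of `γ(1/2+s)/γ(1/2) y^{−s} ds/(2πis)`. -/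
noncomputable def Wfun (k : ℕ) (y : ℝ) : ℂ :=
  (1 / (2 * Real.pi)) *
    ∫ t : ℝ,
      (gammaW k (5 / 2 + t * Complex.I) / gammaW k (1 / 2)) *
        (y : ℂ) ^ (-(2 + t * Complex.I)) / (2 + t * Complex.I)

namespace Stmt7

open Complex MeasureTheory Set Filter Polynomial
open scoped Real Nat

noncomputable def E (y : ℝ) : ℂ := Complex.exp (-(2 * (π : ℂ) * (y : ℂ)))

lemma norm_E (y : ℝ) : ‖E y‖ = Real.exp (-(2 * π * y)) := by
  rw [E, Complex.norm_exp]
  norm_num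

example {g : ℝ → ℂ} {s : Set ℝ} (hs : IsOpen s) (n : ℕ)
    {x : ℝ} (hx : x ∈ s) : iteratedDerivWithin n g s x = iteratedDeriv n g x := by
  induction n generalizing x with
  | zero => simp
  | succ n ih =>
    rw [iteratedDerivWithin_succ, iteratedDeriv_succ]
    rw [derivWithin_of_isOpen hs hx]
    exact Filter.EventuallyEq.deriv_eq <| Filter.eventuallyEq_of_mem (hs.mem_nhds hx) fun y hy => ih hy

lemma poly_le_exp (M : ℕ) {u : ℝ} (hu : 0 ≤ u) :
    (1 + u) ^ M ≤ (M.factorial * 2 ^ M * Real.exp 1) * Real.exp (u / 2) := by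
  have h1 : ((1 + u) / 2) ^ M / M.factorial ≤ Real.exp ((1 + u) / 2) := by
    calc ((1 + u) / 2) ^ M / M.factorial
        ≤ ∑ i ∈ Finset.range (M + 1), ((1 + u) / 2) ^ i / i.factorial := by
          exact Finset.single_le_sum (f := fun i => ((1 + u) / 2) ^ i / i.factorial)
            (fun i _ => by positivity) (Finset.self_mem_range_succ M)
      _ ≤ Real.exp ((1 + u) / 2) := Real.sum_le_exp_of_nonneg (by linarith) _
  have h2 : Real.exp ((1 + u) / 2) ≤ Real.exp 1 * Real.exp (u / 2) := by
    rw [← Real.exp_add]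
    apply Real.exp_le_exp.2
    linarith
  have h3 : (1 + u) ^ M = ((1 + u) / 2) ^ M * 2 ^ M := by
    rw [div_pow]
    field_simp
  rw [h3]
  have hM : (0:ℝ) < M.factorial := by positivity
  calc ((1 + u) / 2) ^ M * 2 ^ M ≤ (M.factorial * Real.exp ((1 + u) / 2)) * 2 ^ M := by
        apply mul_le_mul_of_nonneg_right _ (by positivity)
        rw [div_le_iff₀ hM] at h1
        linarith [h1]
    _ ≤ (M.factorial * (Real.exp 1 * Real.exp (u / 2))) * 2 ^ M := by
        apply mul_le_mul_of_nonneg_right _ (by positivity)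
        exact mul_le_mul_of_nonneg_left h2 hM.le
    _ = (M.factorial * 2 ^ M * Real.exp 1) * Real.exp (u / 2) := by ring

lemma integrable_exp_neg_abs : Integrable (fun t : ℝ => Real.exp (-|t|)) := by
  have h1 : IntegrableOn (fun t : ℝ => Real.exp (-|t|)) (Ioi 0) := by
    refine (exp_neg_integrableOn_Ioi 0 one_pos).congr_fun (fun x hx => ?_) measurableSet_Ioi
    rw [abs_of_pos hx]; ring_nf
  have h2 : IntegrableOn (fun t : ℝ => Real.exp (-|t|)) (Iic 0) := by
    refine (integrableOn_exp_Iic 0).congr_fun (fun x hx => ?_) measurableSet_Iic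
    rw [abs_of_nonpos hx]; ring_nf
  rw [← integrableOn_univ, ← Iic_union_Ioi (a := (0:ℝ))]
  exact h2.union h1


noncomputable def pol (a : ℕ) : Polynomial ℂ :=
  ∑ m ∈ Finset.range a, Polynomial.C (((2 * π) ^ m / m.factorial : ℝ) : ℂ) * Polynomial.X ^ m

noncomputable def f (a : ℕ) (y : ℝ) : ℂ := (pol a).eval (y : ℂ) * E y

lemma f_eq_sum (a : ℕ) (y : ℝ) :
    f a y = ∑ m ∈ Finset.range a,
      (((2 * π) ^ m / m.factorial : ℝ) : ℂ) * (y : ℂ) ^ m * E y := by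
  rw [f, pol, eval_finset_sum, Finset.sum_mul]
  simp

lemma hasDerivAt_polexp (p : Polynomial ℂ) (y : ℝ) :
    HasDerivAt (fun y : ℝ => p.eval (y : ℂ) * E y)
      ((p.derivative - Polynomial.C (2 * (π : ℂ)) * p).eval (y : ℂ) * E y) y := by
  have hexp : ∀ z : ℂ, HasDerivAt (fun z : ℂ => Complex.exp (-(2 * (π : ℂ) * z)))
      (-(2 * (π : ℂ)) * Complex.exp (-(2 * (π : ℂ) * z))) z := by
    intro z
    have h1 : HasDerivAt (fun z : ℂ => -(2 * (π : ℂ) * z)) (-(2 * (π : ℂ))) z := by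
      exact (((hasDerivAt_id z).const_mul (2 * (π : ℂ))).neg).congr_deriv (by simp)
    simpa [mul_comm, Function.comp_def] using (Complex.hasDerivAt_exp _).comp z h1
  have hG : HasDerivAt (fun z : ℂ => p.eval z * Complex.exp (-(2 * (π : ℂ) * z)))
      ((p.derivative - Polynomial.C (2 * (π : ℂ)) * p).eval (y : ℂ)
        * Complex.exp (-(2 * (π : ℂ) * (y : ℂ)))) (y : ℂ) := by
    have := (p.hasDerivAt (y : ℂ)).mul (hexp (y : ℂ))
    refine this.congr_deriv ?_
    simp [eval_sub, eval_mul]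
    ring
  exact hG.comp_ofReal

lemma contDiff_polexp (p : Polynomial ℂ) : ContDiff ℝ (⊤ : ℕ∞) (fun y : ℝ => p.eval (y : ℂ) * E y) := by
  have h1 : ContDiff ℝ (⊤ : ℕ∞) (fun y : ℝ => (y : ℂ)) := Complex.ofRealCLM.contDiff
  have h2 : ContDiff ℝ (⊤ : ℕ∞) (fun y : ℝ => p.eval (y : ℂ)) := by
    have : (fun y : ℝ => p.eval (y : ℂ))
        = fun y : ℝ => ∑ i ∈ Finset.range (p.natDegree + 1), p.coeff i * (y : ℂ) ^ i := by
      funext y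
      rw [eval_eq_sum_range]
    rw [this]
    exact ContDiff.sum fun i _ => contDiff_const.mul (h1.pow i)
  have h3 : ContDiff ℝ (⊤ : ℕ∞) (fun y : ℝ => E y) := by
    have hlin : ContDiff ℝ (⊤ : ℕ∞) (fun y : ℝ => -(2 * (π : ℂ) * (y : ℂ))) :=
      (contDiff_const.mul h1).neg
    exact (ContDiff.restrict_scalars ℝ (𝕜' := ℂ) Complex.contDiff_exp).comp hlin
  exact h2.mul h3

lemma iteratedDeriv_polexp (p : Polynomial ℂ) (j : ℕ) :
    ∃ q : Polynomial ℂ, ∀ y : ℝ,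
      iteratedDeriv j (fun y : ℝ => p.eval (y : ℂ) * E y) y = q.eval (y : ℂ) * E y := by
  induction j with
  | zero => exact ⟨p, fun y => by simp⟩
  | succ j ih =>
    obtain ⟨q, hq⟩ := ih
    refine ⟨q.derivative - Polynomial.C (2 * (π : ℂ)) * q, fun y => ?_⟩
    rw [iteratedDeriv_succ]
    have : deriv (iteratedDeriv j fun y : ℝ => p.eval (y : ℂ) * E y) y
        = deriv (fun y : ℝ => q.eval (y : ℂ) * E y) y := by
      congr 1
      exact funext hq
    rw [this, (hasDerivAt_polexp q y).deriv]

lemma eval_norm_bound (p : Polynomial ℂ) :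
    ∃ M : ℝ, ∀ y : ℝ, 0 ≤ y → ‖p.eval (y : ℂ)‖ ≤ M * (1 + y) ^ p.natDegree := by
  refine ⟨∑ i ∈ Finset.range (p.natDegree + 1), ‖p.coeff i‖, fun y hy => ?_⟩
  rw [eval_eq_sum_range, Finset.sum_mul]
  refine (norm_sum_le _ _).trans (Finset.sum_le_sum fun i hi => ?_)
  rw [norm_mul, norm_pow]
  have h1 : ‖(y:ℂ)‖ = y := by rw [Complex.norm_real, Real.norm_eq_abs, _root_.abs_of_nonneg hy]
  rw [h1]
  have : y ^ i ≤ (1 + y) ^ p.natDegree := by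
    calc y ^ i ≤ (1 + y) ^ i := pow_le_pow_left₀ hy (by linarith) i
      _ ≤ (1 + y) ^ p.natDegree :=
        pow_le_pow_right₀ (by linarith) (Nat.lt_succ_iff.mp (Finset.mem_range.mp hi))
  exact mul_le_mul_of_nonneg_left this (norm_nonneg _)


lemma two_pi_ne : (((2 * π : ℝ) : ℂ)) ≠ 0 := by
  rw [Complex.ofReal_ne_zero]
  positivity

lemma two_pi_cpow_ne (w : ℂ) : (((2 * π : ℝ) : ℂ)) ^ w ≠ 0 := by
  rw [Complex.cpow_def_of_ne_zero two_pi_ne]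
  exact Complex.exp_ne_zero _

lemma aux_inv_cpow (w : ℂ) :
    (1 / ((2 * π : ℝ) : ℂ)) ^ w * (((2 * π : ℝ) : ℂ)) ^ w = 1 := by
  rw [one_div, inv_cpow _ _ (by rw [Complex.arg_ofReal_of_nonneg (by positivity)]; exact
    Real.pi_ne_zero.symm)]
  exact inv_mul_cancel₀ (two_pi_cpow_ne w)

lemma E_eq (t : ℝ) : ((Real.exp (-(2 * π * t)) : ℝ) : ℂ) = E t := by
  rw [E, Complex.ofReal_exp]
  norm_num

lemma integrableOn_cpow_exp {s : ℂ} (hs : 0 < s.re) :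
    IntegrableOn (fun x : ℝ => (x : ℂ) ^ (s - 1) * E x) (Ioi 0) := by
  have h2π : (0:ℝ) < 2 * π := by positivity
  have h := Complex.GammaIntegral_convergent hs
  rw [← mul_zero (2 * π), ← integrableOn_Ioi_comp_mul_left_iff _ _ h2π] at h
  refine (IntegrableOn.congr_fun (h.const_mul ((1 / ((2 * π : ℝ) : ℂ)) ^ (s - 1)))
    (fun t (ht : 0 < t) => ?_) measurableSet_Ioi)
  have h1 : ((2 * π * t : ℝ) : ℂ) ^ (s - 1)
      = (((2 * π : ℝ) : ℂ)) ^ (s - 1) * (t : ℂ) ^ (s - 1) := by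
    rw [show ((2 * π * t : ℝ) : ℂ) = ((2 * π : ℝ) : ℂ) * (t : ℝ) by push_cast; ring]
    exact mul_cpow_ofReal_nonneg h2π.le ht.le _
  calc (1 / ((2 * π : ℝ) : ℂ)) ^ (s - 1)
        * (((Real.exp (-(2 * π * t)) : ℝ) : ℂ) * ((2 * π * t : ℝ) : ℂ) ^ (s - 1))
      = ((1 / ((2 * π : ℝ) : ℂ)) ^ (s - 1) * (((2 * π : ℝ) : ℂ)) ^ (s - 1))
        * ((t : ℂ) ^ (s - 1) * E t) := by rw [h1, E_eq]; ring
    _ = (t : ℂ) ^ (s - 1) * E t := by rw [aux_inv_cpow, one_mul]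

lemma integral_cpow_exp {s : ℂ} (hs : 0 < s.re) :
    ∫ x : ℝ in Ioi 0, (x : ℂ) ^ (s - 1) * E x = (2 * (π : ℂ)) ^ (-s) * Complex.Gamma s := by
  have h2π : (0:ℝ) < 2 * π := by positivity
  have h := integral_cpow_mul_exp_neg_mul_Ioi hs h2π
  have heq : ∀ t : ℝ, t ∈ Ioi (0:ℝ) →
      (t : ℂ) ^ (s - 1) * E t = (t : ℂ) ^ (s - 1) * Complex.exp (-(((2 * π : ℝ) : ℂ) * t)) := by
    intro t _
    rw [E]
    norm_num
  rw [setIntegral_congr_fun measurableSet_Ioi heq, h]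
  congr 1
  rw [one_div, inv_cpow _ _ (by rw [Complex.arg_ofReal_of_nonneg h2π.le]; exact
    Real.pi_ne_zero.symm), ← cpow_neg]
  norm_num

lemma Gamma_add_nat (n : ℕ) {s : ℂ} (hs : 0 < s.re) :
    Complex.Gamma (s + n) = (∏ m ∈ Finset.range n, (s + m)) * Complex.Gamma s := by
  induction n with
  | zero => simp
  | succ n ih =>
    have hne : s + n ≠ 0 := by
      intro hcon
      have : (s + n).re = 0 := by rw [hcon]; simp
      simp only [Complex.add_re, Complex.natCast_re] at this
      have : (0:ℝ) ≤ (n:ℝ) := Nat.cast_nonneg n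
      linarith [hs]
    have : s + ((n : ℂ) + 1) = (s + n) + 1 := by ring
    rw [show ((n + 1 : ℕ) : ℂ) = (n : ℂ) + 1 by push_cast; ring, this,
      Complex.Gamma_add_one _ hne, ih, Finset.prod_range_succ]
    ring

lemma gamma_sum (b : ℕ) {s : ℂ} (hs : 0 < s.re) :
    ∑ m ∈ Finset.range (b + 1), Complex.Gamma (s + m) / m.factorial
      = Complex.Gamma (s + b + 1) / ((b.factorial : ℂ) * s) := by
  have hsne : s ≠ 0 := by
    intro hcon; rw [hcon] at hs; simp at hs
  induction b with
  | zero =>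
    rw [Finset.sum_range_one]
    simp only [Nat.cast_zero, add_zero, Nat.factorial_zero, Nat.cast_one, div_one, one_mul]
    rw [Complex.Gamma_add_one _ hsne]
    field_simp
  | succ b ih =>
    have hbne : (b.factorial : ℂ) ≠ 0 := by exact_mod_cast b.factorial_ne_zero
    have hbne' : ((b + 1).factorial : ℂ) ≠ 0 := by exact_mod_cast (b + 1).factorial_ne_zero
    have hne : s + b + 1 ≠ 0 := by
      intro hcon
      have : (s + b + 1).re = 0 := by rw [hcon]; simp
      simp only [Complex.add_re, Complex.natCast_re, Complex.one_re] at this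
      have : (0:ℝ) ≤ (b:ℝ) := Nat.cast_nonneg b
      linarith [hs]
    have hG : Complex.Gamma (s + (b:ℂ) + 1 + 1) = (s + b + 1) * Complex.Gamma (s + b + 1) :=
      Complex.Gamma_add_one _ hne
    rw [Finset.sum_range_succ, ih, show ((b + 1 : ℕ) : ℂ) = (b:ℂ) + 1 by push_cast; ring,
      show s + ((b:ℂ) + 1) = s + b + 1 by ring, hG]
    have hfac : (((b+1).factorial : ℕ) : ℂ) = ((b:ℂ) + 1) * (b.factorial : ℂ) := by
      rw [Nat.factorial_succ]; push_cast; ring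
    rw [hfac]
    have hb1 : (b:ℂ) + 1 ≠ 0 := by
      intro hcon
      have : ((b:ℂ) + 1).re = 0 := by rw [hcon]; simp
      simp at this
      linarith [Nat.cast_nonneg (α := ℝ) b]
    field_simp
    ring




lemma smul_f_eq {a : ℕ} {s : ℂ} {x : ℝ} (hx : 0 < x) :
    (x : ℂ) ^ (s - 1) • f a x = ∑ m ∈ Finset.range a,
      (((2 * π) ^ m / m.factorial : ℝ) : ℂ) * ((x : ℂ) ^ (s + m - 1) * E x) := by
  rw [smul_eq_mul, f_eq_sum, Finset.mul_sum]
  refine Finset.sum_congr rfl fun m _ => ?_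
  have hxne : (x : ℂ) ≠ 0 := Complex.ofReal_ne_zero.mpr hx.ne'
  have : (x : ℂ) ^ (s + m - 1) = (x : ℂ) ^ (s - 1) * (x : ℂ) ^ m := by
    rw [show s + m - 1 = (s - 1) + m by ring, Complex.cpow_add _ _ hxne, Complex.cpow_natCast]
  rw [this]
  ring

lemma term_integrable (a : ℕ) {s : ℂ} (hs : 0 < s.re) (m : ℕ) :
    IntegrableOn (fun x : ℝ =>
      (((2 * π) ^ m / m.factorial : ℝ) : ℂ) * ((x : ℂ) ^ (s + m - 1) * E x)) (Ioi 0) := by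
  have hsm : 0 < (s + m).re := by
    simp only [Complex.add_re, Complex.natCast_re]
    have : (0:ℝ) ≤ (m:ℝ) := Nat.cast_nonneg m
    linarith
  exact (integrableOn_cpow_exp hsm).const_mul _

lemma mellinConvergent_f (a : ℕ) {s : ℂ} (hs : 0 < s.re) : MellinConvergent (f a) s := by
  rw [MellinConvergent]
  have hsum : IntegrableOn (fun x : ℝ => ∑ m ∈ Finset.range a,
      (((2 * π) ^ m / m.factorial : ℝ) : ℂ) * ((x : ℂ) ^ (s + m - 1) * E x)) (Ioi 0) :=
    integrable_finset_sum _ (fun m _ => term_integrable a hs m)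
  exact hsum.congr_fun (fun x hx => (smul_f_eq (mem_Ioi.mp hx)).symm) measurableSet_Ioi

lemma mellin_f (b : ℕ) {s : ℂ} (hs : 0 < s.re) :
    mellin (f (b + 1)) s
      = (2 * (π : ℂ)) ^ (-s) * Complex.Gamma (s + b + 1) / ((b.factorial : ℂ) * s) := by
  rw [mellin, setIntegral_congr_fun measurableSet_Ioi
    (fun x hx => smul_f_eq (a := b + 1) (s := s) (mem_Ioi.mp hx)),
    integral_finset_sum _ (fun m _ => term_integrable (b + 1) hs m)]
  have hterm : ∀ m ∈ Finset.range (b + 1), ∫ x : ℝ in Ioi 0,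
      (((2 * π) ^ m / m.factorial : ℝ) : ℂ) * ((x : ℂ) ^ (s + m - 1) * E x)
      = (((2 * π) ^ m / m.factorial : ℝ) : ℂ) * ((2 * (π : ℂ)) ^ (-(s + m)) * Complex.Gamma (s + m)) := by
    intro m _
    rw [integral_const_mul]
    congr 1
    have hsm : 0 < (s + m).re := by
      simp only [Complex.add_re, Complex.natCast_re]
      have : (0:ℝ) ≤ (m:ℝ) := Nat.cast_nonneg m
      linarith
    exact integral_cpow_exp hsm
  rw [Finset.sum_congr rfl hterm]
  have hstep : ∀ m : ℕ, (((2 * π) ^ m / m.factorial : ℝ) : ℂ)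
      * ((2 * (π : ℂ)) ^ (-(s + m)) * Complex.Gamma (s + m))
      = (2 * (π : ℂ)) ^ (-s) * (Complex.Gamma (s + m) / m.factorial) := by
    intro m
    have h2πc : (2 * (π : ℂ)) ≠ 0 := by
      intro hcon
      have := congrArg Complex.re hcon
      simp at this
    have hsplit : (2 * (π : ℂ)) ^ (-(s + (m:ℂ))) = (2 * (π : ℂ)) ^ (-s) * ((2 * (π : ℂ)) ^ m)⁻¹ := by
      have h1 : (2 * (π : ℂ)) ^ (-((m:ℂ))) = ((2 * (π : ℂ)) ^ m)⁻¹ := by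
        rw [Complex.cpow_neg, Complex.cpow_natCast]
      rw [show -(s + (m:ℂ)) = -s + (-(m:ℂ)) by ring, Complex.cpow_add _ _ h2πc, h1]
    have hcast : (((2 * π) ^ m / m.factorial : ℝ) : ℂ)
        = (2 * (π:ℂ)) ^ m / ((m.factorial : ℕ) : ℂ) := by push_cast; ring
    rw [hsplit, hcast]
    have hfacne : ((m.factorial : ℕ) : ℂ) ≠ 0 := Nat.cast_ne_zero.mpr m.factorial_ne_zero
    have hpowne : (2 * (π : ℂ)) ^ m ≠ 0 := pow_ne_zero _ h2πc
    field_simp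
  rw [Finset.sum_congr rfl (fun m _ => hstep m), ← Finset.mul_sum, gamma_sum b hs]
  ring

lemma normSq_Gamma_one_add {t : ℝ} (ht : t ≠ 0) :
    Complex.normSq (Complex.Gamma (1 + t * I)) = π * t / Real.sinh (π * t) := by
  have hne : (t : ℂ) * I ≠ 0 := by
    simp [Complex.ext_iff, ht]
  have h1 : Complex.Gamma (1 + t * I) = (t * I) * Complex.Gamma (t * I) := by
    rw [add_comm]
    exact Complex.Gamma_add_one _ hne
  have hconj : Complex.Gamma (1 - t * I) = starRingEnd ℂ (Complex.Gamma (1 + t * I)) := by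
    rw [← Complex.Gamma_conj]
    congr 1
    simp [Complex.ext_iff]
  have hrefl : Complex.Gamma ((t : ℂ) * I) * Complex.Gamma (1 - t * I)
      = (π : ℂ) / Complex.sin (π * (t * I)) := Complex.Gamma_mul_Gamma_one_sub _
  have hsin : Complex.sin ((π : ℂ) * (t * I)) = Real.sinh (π * t) * I := by
    rw [show (π : ℂ) * ((t:ℂ) * I) = ((π * t : ℝ) : ℂ) * I by push_cast; ring,
      Complex.sin_mul_I, Complex.ofReal_sinh]
  have hsinh_ne : Real.sinh (π * t) ≠ 0 := by
    simp only [ne_eq, Real.sinh_eq_zero]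
    exact mul_ne_zero Real.pi_ne_zero ht
  have key : (Complex.normSq (Complex.Gamma (1 + t * I)) : ℂ) = ((π * t / Real.sinh (π * t) : ℝ) : ℂ) := by
    rw [← Complex.mul_conj, ← hconj, h1, mul_assoc, hrefl, hsin]
    rw [Complex.ofReal_div, Complex.ofReal_mul]
    field_simp [Complex.I_ne_zero, Complex.ofReal_ne_zero.mpr hsinh_ne]
  exact_mod_cast key

lemma div_sinh_le {x : ℝ} (hx : 0 < x) : x / Real.sinh x ≤ 2 * (1 + x) * Real.exp (-x) := by
  have hs : 0 < Real.sinh x := Real.sinh_pos_iff.mpr hx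
  rw [div_le_iff₀ hs]
  have hu : Real.exp x * Real.exp (-x) = 1 := by rw [← Real.exp_add]; simp
  have h2 : 1 + 2 * x ≤ Real.exp x * Real.exp x := by
    rw [← Real.exp_add, show x + x = 2 * x by ring]
    have := Real.add_one_le_exp (2 * x)
    linarith
  have hsinh : Real.sinh x = (Real.exp x - Real.exp (-x)) / 2 := Real.sinh_eq x
  have hvpos : 0 < Real.exp (-x) := Real.exp_pos _
  have h3 : (1 + 2 * x) * (Real.exp (-x) * Real.exp (-x))
      ≤ (Real.exp x * Real.exp x) * (Real.exp (-x) * Real.exp (-x)) :=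
    mul_le_mul_of_nonneg_right h2 (by positivity)
  have h4 : (Real.exp x * Real.exp x) * (Real.exp (-x) * Real.exp (-x)) = 1 := by
    nlinarith [hu]
  have h8 : (1 + x) * (Real.exp (-x) * Real.exp (-x)) ≤ 1 := by
    nlinarith [mul_pos hx (mul_pos hvpos hvpos)]
  rw [hsinh]
  have h6 : 2 * (1 + x) * Real.exp (-x) * ((Real.exp x - Real.exp (-x)) / 2)
      = (1 + x) * (1 - Real.exp (-x) * Real.exp (-x)) := by
    linear_combination (1 + x) * hu
  rw [h6]
  nlinarith [h8]

lemma norm_Gamma_one_add_le (t : ℝ) :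
    ‖Complex.Gamma (1 + t * I)‖ ≤ 2 * (1 + 4 * |t|) * Real.exp (-(3 / 2) * |t|) := by
  rcases eq_or_ne t 0 with rfl | ht
  · simp [Complex.Gamma_one]
  · have h1 : Complex.normSq (Complex.Gamma (1 + t * I)) = π * |t| / Real.sinh (π * |t|) := by
      rw [normSq_Gamma_one_add ht]
      rcases abs_cases t with ⟨h, _⟩ | ⟨h, _⟩
      · rw [h]
      · rw [h, show π * -t = -(π * t) by ring, Real.sinh_neg, neg_div_neg_eq]
    have habs : 0 < |t| := abs_pos.mpr ht
    have hx : 0 < π * |t| := by positivity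
    have h2 := div_sinh_le hx
    rw [Complex.norm_def, h1]
    have hsq : (Real.exp (-(3 / 2) * |t|)) ^ 2 = Real.exp (-(3 * |t|)) := by
      rw [sq, ← Real.exp_add]; ring_nf
    have hπ4 : π ≤ 4 := Real.pi_le_four
    have hπ3 : 3 ≤ π := by linarith [Real.pi_gt_three]
    calc Real.sqrt (π * |t| / Real.sinh (π * |t|))
        ≤ Real.sqrt ((2 * (1 + 4 * |t|) * Real.exp (-(3 / 2) * |t|)) ^ 2) := by
          apply Real.sqrt_le_sqrt
          have hexp : Real.exp (-(π * |t|)) ≤ Real.exp (-(3 * |t|)) := by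
            apply Real.exp_le_exp.2
            nlinarith
          have ha : 2 * (1 + π * |t|) ≤ 4 * (1 + 4 * |t|) ^ 2 := by nlinarith
          calc π * |t| / Real.sinh (π * |t|) ≤ 2 * (1 + π * |t|) * Real.exp (-(π * |t|)) := h2
            _ ≤ (4 * (1 + 4 * |t|) ^ 2) * Real.exp (-(3 * |t|)) := by
                apply mul_le_mul ha hexp (Real.exp_pos _).le (by positivity)
            _ = (2 * (1 + 4 * |t|) * Real.exp (-(3 / 2) * |t|)) ^ 2 := by
                rw [mul_pow, mul_pow, hsq]; ring
      _ = 2 * (1 + 4 * |t|) * Real.exp (-(3 / 2) * |t|) := Real.sqrt_sq (by positivity)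




lemma re_vert (t : ℝ) : (((2:ℝ) : ℂ) + t * I).re = 2 := by simp

lemma vert_ne (t : ℝ) : (((2:ℝ) : ℂ) + t * I) ≠ 0 := by
  intro h
  have := congrArg Complex.re h
  simp at this

lemma norm_vert_ge (t : ℝ) : 2 ≤ ‖(((2:ℝ) : ℂ) + t * I)‖ := by
  have h := Complex.abs_re_le_norm (((2:ℝ) : ℂ) + t * I)
  rw [re_vert] at h
  simpa using le_trans (by norm_num) h

lemma norm_Gamma_vert_le (b : ℕ) (t : ℝ) :
    ‖Complex.Gamma ((((2:ℝ):ℂ) + t * I) + b + 1)‖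
      ≤ ((b + 2 : ℝ) * (1 + |t|)) ^ (b + 2) * (2 * (1 + 4 * |t|) * Real.exp (-(3 / 2) * |t|)) := by
  have hre : (0:ℝ) < (1 + (t:ℂ) * I).re := by simp
  have harg : (((2:ℝ):ℂ) + t * I) + b + 1 = (1 + (t:ℂ) * I) + ((b + 2 : ℕ) : ℂ) := by
    push_cast; ring
  rw [harg, Gamma_add_nat (b + 2) hre, norm_mul]
  have hprod : ‖∏ m ∈ Finset.range (b + 2), ((1 + (t:ℂ) * I) + m)‖
      ≤ ((b + 2 : ℝ) * (1 + |t|)) ^ (b + 2) := by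
    rw [show ‖∏ m ∈ Finset.range (b + 2), ((1 + (t:ℂ) * I) + m)‖
      = ∏ m ∈ Finset.range (b + 2), ‖(1 + (t:ℂ) * I) + m‖ from by
        exact norm_prod _ _]
    calc ∏ m ∈ Finset.range (b + 2), ‖(1 + (t:ℂ) * I) + m‖
        ≤ ∏ _m ∈ Finset.range (b + 2), ((b + 2 : ℝ) * (1 + |t|)) := by
          apply Finset.prod_le_prod (fun m _ => norm_nonneg _) (fun m hm => ?_)
          have h1 : ‖(1 + (t:ℂ) * I) + m‖ ≤ ‖((1 + m : ℕ) : ℂ)‖ + ‖(t:ℂ) * I‖ := by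
            refine le_trans (le_of_eq ?_) (norm_add_le _ _)
            congr 1
            push_cast; ring
          have h2 : ‖((1 + m : ℕ) : ℂ)‖ = (1 + m : ℝ) := by
            rw [Complex.norm_natCast]; push_cast; ring
          have h3 : ‖(t:ℂ) * I‖ = |t| := by
            simp
          have hm' : (m : ℝ) ≤ (b + 1 : ℝ) := by
            have := Finset.mem_range.mp hm
            exact_mod_cast Nat.lt_succ_iff.mp (by omega)
          have habs : 0 ≤ |t| := abs_nonneg t
          calc ‖(1 + (t:ℂ) * I) + m‖ ≤ (1 + m : ℝ) + |t| := by rw [← h2, ← h3]; exact h1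
            _ ≤ (b + 2 : ℝ) * (1 + |t|) := by nlinarith
      _ = ((b + 2 : ℝ) * (1 + |t|)) ^ (b + 2) := by
          rw [Finset.prod_const, Finset.card_range]
  calc ‖∏ m ∈ Finset.range (b + 2), ((1 + (t:ℂ) * I) + m)‖ * ‖Complex.Gamma (1 + (t:ℂ) * I)‖
      ≤ ((b + 2 : ℝ) * (1 + |t|)) ^ (b + 2) * (2 * (1 + 4 * |t|) * Real.exp (-(3 / 2) * |t|)) :=
        mul_le_mul hprod (norm_Gamma_one_add_le t) (norm_nonneg _) (by positivity)

noncomputable def G (b : ℕ) (t : ℝ) : ℂ :=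
  (2 * (π : ℂ)) ^ (-(((2:ℝ):ℂ) + t * I)) * Complex.Gamma ((((2:ℝ):ℂ) + t * I) + b + 1)
    / ((b.factorial : ℂ) * (((2:ℝ):ℂ) + t * I))

lemma continuous_G (b : ℕ) : Continuous (G b) := by
  have hvert : Continuous (fun t : ℝ => (((2:ℝ):ℂ) + t * I)) :=
    continuous_const.add (Complex.continuous_ofReal.mul continuous_const)
  have h2πne : (2 * (π : ℂ)) ≠ 0 := by
    intro hcon
    have := congrArg Complex.re hcon
    simp at this
  have hc1 : Continuous (fun t : ℝ => (2 * (π : ℂ)) ^ (-(((2:ℝ):ℂ) + t * I))) :=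
    hvert.neg.const_cpow (Or.inl h2πne)
  have hc2 : Continuous (fun t : ℝ => Complex.Gamma ((((2:ℝ):ℂ) + t * I) + b + 1)) := by
    rw [continuous_iff_continuousAt]
    intro t
    have hG : DifferentiableAt ℂ Complex.Gamma ((((2:ℝ):ℂ) + t * I) + b + 1) := by
      apply Complex.differentiableAt_Gamma
      intro m hcon
      have := congrArg Complex.re hcon
      simp at this
      have h0 : (0:ℝ) ≤ (b:ℝ) := Nat.cast_nonneg b
      have h1 : (0:ℝ) ≤ (m:ℝ) := Nat.cast_nonneg m
      linarith
    have hin : ContinuousAt (fun s : ℝ => (((2:ℝ):ℂ) + s * I) + b + 1) t :=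
      ((hvert.add continuous_const).add continuous_const).continuousAt
    exact ContinuousAt.comp (g := Complex.Gamma)
      (f := fun s : ℝ => (((2:ℝ):ℂ) + s * I) + b + 1) (x := t) hG.continuousAt hin
  have hc3 : Continuous (fun t : ℝ => ((b.factorial : ℂ) * (((2:ℝ):ℂ) + t * I))) :=
    continuous_const.mul hvert
  exact (hc1.mul hc2).div hc3 (fun t => mul_ne_zero
    (Nat.cast_ne_zero.mpr b.factorial_ne_zero) (vert_ne t))

lemma norm_G_le (b : ℕ) (t : ℝ) :
    ‖G b t‖ ≤ (8 * (b + 2 : ℝ) ^ (b + 2) * ((b + 3).factorial * 2 ^ (b + 3) * Real.exp 1))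
      * Real.exp (-|t|) := by
  have habs : (0:ℝ) ≤ |t| := abs_nonneg t
  have h1 : ‖(2 * (π : ℂ)) ^ (-(((2:ℝ):ℂ) + t * I))‖ ≤ 1 := by
    rw [show (2 * (π : ℂ)) = (((2 * π : ℝ)) : ℂ) by push_cast; ring,
      Complex.norm_cpow_eq_rpow_re_of_pos (by positivity)]
    apply Real.rpow_le_one_of_one_le_of_nonpos
    · nlinarith [Real.pi_gt_three]
    · simp
  have h2 : ‖((b.factorial : ℂ) * (((2:ℝ):ℂ) + t * I))‖ ≥ 1 := by
    rw [norm_mul]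
    have hb : (1:ℝ) ≤ ‖(b.factorial : ℂ)‖ := by
      rw [Complex.norm_natCast]
      exact_mod_cast b.factorial_pos
    nlinarith [norm_vert_ge t]
  have hG : ‖G b t‖ ≤ ‖Complex.Gamma ((((2:ℝ):ℂ) + t * I) + b + 1)‖ := by
    rw [G, norm_div, norm_mul]
    calc ‖(2 * (π : ℂ)) ^ (-(((2:ℝ):ℂ) + t * I))‖ * ‖Complex.Gamma ((((2:ℝ):ℂ) + t * I) + b + 1)‖
          / ‖(b.factorial : ℂ) * (((2:ℝ):ℂ) + t * I)‖
        ≤ 1 * ‖Complex.Gamma ((((2:ℝ):ℂ) + t * I) + b + 1)‖ / 1 := by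
          apply div_le_div₀ (by positivity)
            (mul_le_mul_of_nonneg_right h1 (norm_nonneg _)) one_pos h2
      _ = ‖Complex.Gamma ((((2:ℝ):ℂ) + t * I) + b + 1)‖ := by ring
  refine hG.trans ((norm_Gamma_vert_le b t).trans ?_)
  have hpoly : (1 + |t|) ^ (b + 3)
      ≤ ((b + 3).factorial * 2 ^ (b + 3) * Real.exp 1) * Real.exp (|t| / 2) :=
    poly_le_exp (b + 3) habs
  have step1 : ((b + 2 : ℝ) * (1 + |t|)) ^ (b + 2) * (2 * (1 + 4 * |t|) * Real.exp (-(3 / 2) * |t|))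
      ≤ (8 * (b + 2 : ℝ) ^ (b + 2)) * ((1 + |t|) ^ (b + 3) * Real.exp (-(3 / 2) * |t|)) := by
    rw [mul_pow]
    have h14 : (1 + 4 * |t|) ≤ 4 * (1 + |t|) := by linarith
    have hp1 : (0:ℝ) < (b + 2 : ℝ) ^ (b + 2) := by positivity
    have hp2 : (0:ℝ) ≤ (1 + |t|) ^ (b + 2) := by positivity
    have key : (1 + |t|) ^ (b + 2) * (1 + 4 * |t|) ≤ 4 * (1 + |t|) ^ (b + 3) := by
      calc (1 + |t|) ^ (b + 2) * (1 + 4 * |t|) ≤ (1 + |t|) ^ (b + 2) * (4 * (1 + |t|)) :=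
            mul_le_mul_of_nonneg_left h14 hp2
        _ = 4 * (1 + |t|) ^ (b + 3) := by rw [pow_succ]; ring
    nlinarith [Real.exp_pos (-(3 / 2) * |t|), mul_le_mul_of_nonneg_right key
      (Real.exp_pos (-(3 / 2) * |t|)).le, hp1, mul_le_mul_of_nonneg_left
      (mul_le_mul_of_nonneg_right key (Real.exp_pos (-(3 / 2) * |t|)).le) hp1.le]
  refine step1.trans ?_
  have step2 : (1 + |t|) ^ (b + 3) * Real.exp (-(3 / 2) * |t|)
      ≤ ((b + 3).factorial * 2 ^ (b + 3) * Real.exp 1) * Real.exp (-|t|) := by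
    calc (1 + |t|) ^ (b + 3) * Real.exp (-(3 / 2) * |t|)
        ≤ (((b + 3).factorial * 2 ^ (b + 3) * Real.exp 1) * Real.exp (|t| / 2))
          * Real.exp (-(3 / 2) * |t|) :=
          mul_le_mul_of_nonneg_right hpoly (Real.exp_pos _).le
      _ = ((b + 3).factorial * 2 ^ (b + 3) * Real.exp 1)
          * (Real.exp (|t| / 2) * Real.exp (-(3 / 2) * |t|)) := by ring
      _ = ((b + 3).factorial * 2 ^ (b + 3) * Real.exp 1) * Real.exp (-|t|) := by
          rw [← Real.exp_add]; ring_nf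
  calc (8 * (b + 2 : ℝ) ^ (b + 2)) * ((1 + |t|) ^ (b + 3) * Real.exp (-(3 / 2) * |t|))
      ≤ (8 * (b + 2 : ℝ) ^ (b + 2))
        * (((b + 3).factorial * 2 ^ (b + 3) * Real.exp 1) * Real.exp (-|t|)) :=
        mul_le_mul_of_nonneg_left step2 (by positivity)
    _ = (8 * (b + 2 : ℝ) ^ (b + 2) * ((b + 3).factorial * 2 ^ (b + 3) * Real.exp 1))
        * Real.exp (-|t|) := by ring

lemma verticalIntegrable_mellin_f (b : ℕ) :
    Complex.VerticalIntegrable (mellin (f (b + 1))) 2 := by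
  have hGint : Integrable (G b) := by
    refine Integrable.mono' ((integrable_exp_neg_abs.const_mul
      (8 * (b + 2 : ℝ) ^ (b + 2) * ((b + 3).factorial * 2 ^ (b + 3) * Real.exp 1))))
      (continuous_G b).aestronglyMeasurable ?_
    exact Filter.Eventually.of_forall (norm_G_le b)
  refine hGint.congr (Filter.Eventually.of_forall fun t => ?_)
  show G b t = mellin (f (b + 1)) (((2:ℝ):ℂ) + t * I)
  rw [G, mellin_f b (by rw [re_vert]; norm_num)]




lemma two_pi_c_ne : (2 * (π : ℂ)) ≠ 0 := by
  intro hcon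
  have := congrArg Complex.re hcon
  simp at this

lemma two_pi_c_cpow_ne (w : ℂ) : (2 * (π : ℂ)) ^ w ≠ 0 := by
  rw [Complex.cpow_def_of_ne_zero two_pi_c_ne]
  exact Complex.exp_ne_zero _

lemma Gamma_nat' {a : ℕ} (ha : 1 ≤ a) : Complex.Gamma (a : ℂ) = ((a - 1).factorial : ℂ) := by
  have h : (a - 1) + 1 = a := Nat.sub_add_cancel ha
  rw [← h]
  push_cast
  rw [Complex.Gamma_nat_eq_factorial]

lemma gammaW_ratio {k a : ℕ} (ha : 1 ≤ a) (hk : k = 2 * a) (w : ℂ) :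
    gammaW k (w + 1 / 2) / gammaW k (1 / 2)
      = (2 * (π : ℂ)) ^ (-w) * Complex.Gamma (w + a) / (((a - 1).factorial : ℕ) : ℂ) := by
  have hkc : ((k : ℕ) : ℂ) = 2 * (a : ℂ) := by rw [hk]; push_cast; ring
  have harg1 : (w + 1 / 2) + (((k : ℕ) : ℂ) - 1) / 2 = w + a := by rw [hkc]; ring
  have harg2 : (1 / 2 : ℂ) + (((k : ℕ) : ℂ) - 1) / 2 = (a : ℂ) := by rw [hkc]; ring
  rw [gammaW, gammaW, harg1, harg2, Gamma_nat' ha]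
  have hsplit : (2 * (Real.pi : ℂ)) ^ (-(w + 1 / 2))
      = (2 * (Real.pi : ℂ)) ^ (-w) * (2 * (Real.pi : ℂ)) ^ (-(1 / 2) : ℂ) := by
    rw [← Complex.cpow_add _ _ two_pi_c_ne]
    ring_nf
  rw [hsplit]
  have h1 : (2 * (Real.pi : ℂ)) ^ (-(1 / 2) : ℂ) ≠ 0 := two_pi_c_cpow_ne _
  have h2 : (((a - 1).factorial : ℕ) : ℂ) ≠ 0 := Nat.cast_ne_zero.mpr (a - 1).factorial_ne_zero
  rw [show (2 * (Real.pi : ℂ)) ^ (-w) * (2 * (Real.pi : ℂ)) ^ (-(1/2) : ℂ) * Complex.Gamma (w + a)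
      = (2 * (Real.pi : ℂ)) ^ (-(1/2) : ℂ) * ((2 * (Real.pi : ℂ)) ^ (-w) * Complex.Gamma (w + a))
      from by ring,
    mul_div_mul_left _ _ h1]

lemma vert_ne' (t : ℝ) : ((2 : ℂ) + t * I) ≠ 0 := by
  intro h
  have := congrArg Complex.re h
  simp at this

lemma Wfun_eq_f {k : ℕ} (a : ℕ) (ha : 2 ≤ a) (hk : k = 2 * a) {y : ℝ} (hy : 0 < y) :
    Wfun k y = f a y := by
  obtain ⟨b, rfl⟩ : ∃ b, a = b + 1 := ⟨a - 1, (Nat.succ_pred_eq_of_pos (by omega)).symm⟩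
  have hre : (0 : ℝ) < ((2 : ℝ) : ℂ).re := by norm_num
  have hinv := mellinInv_mellin_eq 2 (f (b + 1)) hy (mellinConvergent_f (b + 1) (by norm_num))
    (verticalIntegrable_mellin_f b) (contDiff_polexp (pol (b + 1))).continuous.continuousAt
  rw [← hinv, mellinInv, Wfun]
  rw [Complex.real_smul]
  congr 1
  · push_cast
    ring
  refine integral_congr_ae (Filter.Eventually.of_forall fun t => ?_)
  show gammaW k (5 / 2 + t * I) / gammaW k (1 / 2) * (y:ℂ) ^ (-(2 + (t:ℂ) * I)) / (2 + t * I)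
    = (y:ℂ) ^ (-(((2:ℝ):ℂ) + t * I)) • mellin (f (b + 1)) (((2:ℝ):ℂ) + t * I)
  have h52 : (5 / 2 : ℂ) + t * I = ((2 : ℂ) + t * I) + 1 / 2 := by ring
  rw [h52, gammaW_ratio (by omega) hk ((2 : ℂ) + t * I)]
  have hvre : (0 : ℝ) < (((2 : ℝ) : ℂ) + t * I).re := by simp
  rw [smul_eq_mul, mellin_f b hvre]
  have hc2 : (((2 : ℝ) : ℂ)) = (2 : ℂ) := by push_cast; ring
  rw [hc2]
  have hargs : ((2 : ℂ) + t * I) + (((b + 1 : ℕ)) : ℂ) = (2 : ℂ) + t * I + b + 1 := by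
    push_cast; ring
  rw [hargs]
  have hsub : (b + 1 - 1 : ℕ) = b := by omega
  rw [hsub]
  have hbne : ((b.factorial : ℕ) : ℂ) ≠ 0 := Nat.cast_ne_zero.mpr b.factorial_ne_zero
  field_simp

lemma iteratedDerivWithin_of_isOpen' {g : ℝ → ℂ} {s : Set ℝ} (hs : IsOpen s) (n : ℕ)
    {x : ℝ} (hx : x ∈ s) : iteratedDerivWithin n g s x = iteratedDeriv n g x := by
  induction n generalizing x with
  | zero => simp
  | succ n ih =>
    rw [iteratedDerivWithin_succ, iteratedDeriv_succ]
    rw [derivWithin_of_isOpen hs hx]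
    exact Filter.EventuallyEq.deriv_eq <| Filter.eventuallyEq_of_mem (hs.mem_nhds hx)
      fun y hy => ih hy

end Stmt7

/-- `W` is smooth on `(0,∞)` and `y^j W^{(j)}(y) ≪_{k,j,A} (1+y)^{−A}`. -/
theorem statement7 (k : ℕ) (hk : Even k) (hk4 : 4 ≤ k) (j : ℕ) (A : ℝ) (hA : 1 ≤ A) :
    ContDiffOn ℝ (⊤ : ℕ∞) (Wfun k) (Set.Ioi 0) ∧
      ∃ C : ℝ, ∀ y : ℝ, 0 < y →
        ‖(y : ℂ) ^ j * iteratedDerivWithin j (Wfun k) (Set.Ioi 0) y‖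
          ≤ C * (1 + y) ^ (-A) := by
  classical
  obtain ⟨r, hr⟩ := hk
  obtain ⟨a, hk2⟩ : ∃ a, k = 2 * a := ⟨r, by omega⟩
  have ha2 : 2 ≤ a := by omega
  have hEq : ∀ y ∈ Set.Ioi (0:ℝ), Wfun k y = Stmt7.f a y :=
    fun y hy => Stmt7.Wfun_eq_f a ha2 hk2 hy
  have hf : ContDiff ℝ (⊤ : ℕ∞) (Stmt7.f a) := Stmt7.contDiff_polexp (Stmt7.pol a)
  refine ⟨hf.contDiffOn.congr hEq, ?_⟩
  obtain ⟨q, hq⟩ := Stmt7.iteratedDeriv_polexp (Stmt7.pol a) j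
  obtain ⟨M, hM⟩ := Stmt7.eval_norm_bound q
  have hM0 : 0 ≤ M := by
    have h1 := hM 0 le_rfl
    have h0 : (0:ℝ) ≤ ‖q.eval ((0:ℝ):ℂ)‖ := norm_nonneg _
    have := le_trans h0 h1
    simpa using this
  set n := ⌈A⌉₊ with hn
  set d := q.natDegree with hd
  set π := Real.pi
  refine ⟨M * ((n + j + d).factorial * 2 ^ (n + j + d) * Real.exp 1), fun y hy => ?_⟩
  have hy0 : (0:ℝ) ≤ y := le_of_lt hy
  have h1y : (0:ℝ) < 1 + y := by linarith
  have hEqOn : Set.EqOn (Wfun k) (Stmt7.f a) (Set.Ioi 0) := hEq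
  have hw : iteratedDerivWithin j (Wfun k) (Set.Ioi 0) y = q.eval (y:ℂ) * Stmt7.E y := by
    rw [iteratedDerivWithin_congr hEqOn hy,
      Stmt7.iteratedDerivWithin_of_isOpen' isOpen_Ioi j hy]
    exact hq y
  rw [hw]
  have hnorm : ‖(y:ℂ) ^ j * (q.eval (y:ℂ) * Stmt7.E y)‖
      = y ^ j * (‖q.eval (y:ℂ)‖ * Real.exp (-(2 * π * y))) := by
    rw [norm_mul, norm_mul, norm_pow, Stmt7.norm_E, Complex.norm_real, Real.norm_eq_abs,
      abs_of_nonneg hy0]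
  rw [hnorm]
  rw [Real.rpow_neg h1y.le, ← div_eq_mul_inv, le_div_iff₀ (Real.rpow_pos_of_pos h1y A)]
  have hA2 : (1+y) ^ A ≤ (1+y) ^ (n:ℕ) := by
    rw [← Real.rpow_natCast (1+y) n]
    exact Real.rpow_le_rpow_of_exponent_le (by linarith) (Nat.le_ceil A)
  have hyj : y ^ j ≤ (1+y) ^ j := pow_le_pow_left₀ hy0 (by linarith) j
  have hqb := hM y hy0
  have hexp := Real.exp_pos (-(2 * π * y))
  have key : (1+y) ^ (n+j+d) * Real.exp (-(2 * π * y))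
      ≤ (n+j+d).factorial * 2 ^ (n+j+d) * Real.exp 1 := by
    have hp := Stmt7.poly_le_exp (n+j+d) (u := y) hy0
    have hle : Real.exp (y/2) * Real.exp (-(2 * π * y)) ≤ 1 := by
      rw [← Real.exp_add, Real.exp_le_one_iff]
      nlinarith [Real.pi_gt_three]
    calc (1+y) ^ (n+j+d) * Real.exp (-(2 * π * y))
        ≤ ((n+j+d).factorial * 2 ^ (n+j+d) * Real.exp 1) * Real.exp (y/2)
          * Real.exp (-(2 * π * y)) := mul_le_mul_of_nonneg_right hp hexp.le
      _ = ((n+j+d).factorial * 2 ^ (n+j+d) * Real.exp 1)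
          * (Real.exp (y/2) * Real.exp (-(2 * π * y))) := by ring
      _ ≤ ((n+j+d).factorial * 2 ^ (n+j+d) * Real.exp 1) * 1 :=
          mul_le_mul_of_nonneg_left hle (by positivity)
      _ = _ := mul_one _
  calc y ^ j * (‖q.eval (y:ℂ)‖ * Real.exp (-(2 * π * y))) * (1+y) ^ A
      ≤ y ^ j * (‖q.eval (y:ℂ)‖ * Real.exp (-(2 * π * y))) * (1+y) ^ (n:ℕ) := by
        apply mul_le_mul_of_nonneg_left hA2 (by positivity)
    _ ≤ (1+y) ^ j * ((M * (1+y) ^ d) * Real.exp (-(2 * π * y))) * (1+y) ^ (n:ℕ) := by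
        gcongr
    _ = M * ((1+y) ^ (n+j+d) * Real.exp (-(2 * π * y))) := by
        rw [pow_add, pow_add]
        ring
    _ ≤ M * ((n+j+d).factorial * 2 ^ (n+j+d) * Real.exp 1) :=
        mul_le_mul_of_nonneg_left key hM0
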